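/- Let n ≥ 2 be an integer and let c_1, …, c_{2n−1} be as defined. Then for all real numbers p, q with 0 ≤ p and |q| ≤ p: p^{2n} + Σ_{k=1}^{2n−1} c_k·p^{2n−k}·q^k + (−1)^n·q^{2n}/(2n+1) ≤ ((2 − c_1)/2)·p^{2n}. -/

import Mathlib

open Finset

/-- The coefficients `c_k`, `k = 1, …, 2n−1`, of the auxiliary function `h`:
`c₁ = 1/2 + Σ_{j=1}^{n+1} (−1)^{j+1}·((2j−3)/(2(2j−1)))·C(n+1,j)`;
`c_{2m} = Σ_{j=m+1}^{n+1} (−1)^{j+1}·((2j−2m−1)/(2j−1))·C(n+1,j)` for `m = 1,…,n−1`;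
`c_{2m−1} = Σ_{j=m+1}^{n+1} (−1)^{j+1}·((2j−2m)/(2j−1))·C(n+1,j)` for `m = 2,…,n`. -/
noncomputable def gmchC (n k : ℕ) : ℝ :=
  if k = 1 then
    1 / 2 + ∑ j ∈ Finset.Icc 1 (n + 1),
      (-1 : ℝ) ^ (j + 1) * ((2 * (j : ℝ) - 3) / (2 * (2 * (j : ℝ) - 1))) * ((n + 1).choose j : ℝ)
  else
    ∑ j ∈ Finset.Icc ((k + 1) / 2 + 1) (n + 1),
      (-1 : ℝ) ^ (j + 1) * ((2 * (j : ℝ) - ((k : ℝ) + 1)) / (2 * (j : ℝ) - 1)) *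
        ((n + 1).choose j : ℝ)

/-!
With `u = q / p` the claim reads `P u ≤ 1 - c₁ / 2` for `|u| ≤ 1`, where `P` is the left side at
`p = 1`. Every coefficient is a weighted count `c_l = ∑ⱼ wⱼ (2j - 1 - l)₊` with
`wⱼ = (-1)^(j+1) C(n+1, j) / (2j - 1)`, so summing the arithmetico-geometric series in `u` gives
`(1 - u)² (P u - 1 + c₁ / 2) = ∑ⱼ wⱼ (u^(2j) - j u² + j - 1)`. By the binomial theorem this is
`-B |u|` with `B s = (n + 1) ((1 + s²) I 1 - 2 s I s) - (1 - s²)^(n+1)` and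
`I s = ∫₀ˢ (1 - t²)ⁿ dt`. Now `B 1 = 0` and `B' s = 2 (n + 1) (s I 1 - I s) ≤ 0` on `[0, 1]`
because `I` is concave there, so `B ≥ 0`; the endpoints `u = ±1` follow by continuity.
-/

lemma sum_choose_mul_neg_pow (N : ℕ) (x : ℝ) :
    ∑ j ∈ range (N + 1), (N.choose j : ℝ) * (-x) ^ j = (1 - x) ^ N := by
  rw [sub_eq_neg_add, add_pow]
  simp [mul_comm]

lemma sum_neg_one_pow_mul_choose {N : ℕ} (hN : N ≠ 0) :
    ∑ j ∈ range (N + 1), (-1 : ℝ) ^ j * (N.choose j : ℝ) = 0 := by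
  exact_mod_cast Int.alternating_sum_range_choose_of_ne hN

lemma sum_range_succ_eq_add_sum_Icc {M : Type*} [AddCommMonoid M] (f : ℕ → M) (N : ℕ) :
    ∑ j ∈ range (N + 1), f j = f 0 + ∑ j ∈ Icc 1 N, f j := by
  rw [Nat.range_succ_eq_Icc_zero, ← insert_Icc_add_one_left_eq_Icc N.zero_le,
    sum_insert (by simp), zero_add]

lemma sum_Icc_neg_one_pow_succ_mul_choose (N : ℕ) (hN : N ≠ 0) :
    ∑ j ∈ Icc 1 N, (-1 : ℝ) ^ (j + 1) * (N.choose j : ℝ) = 1 := by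
  have h := sum_neg_one_pow_mul_choose hN
  rw [sum_range_succ_eq_add_sum_Icc] at h
  simp only [pow_zero, Nat.choose_zero_right, Nat.cast_one, mul_one] at h
  simp only [pow_succ, mul_neg_one, neg_mul, sum_neg_distrib]
  linarith

lemma two_mul_cast_sub_one_ne_zero (j : ℕ) : (2 * j - 1 : ℝ) ≠ 0 := by
  have : (2 * j : ℝ) ≠ 1 := by exact_mod_cast (by omega : 2 * j ≠ 1)
  exact sub_ne_zero.mpr this

lemma one_sub_sq_mul_sum_range_sub_mul_pow (m : ℕ) (x : ℝ) :
    (1 - x) ^ 2 * ∑ i ∈ range m, ((m : ℝ) - i) * x ^ i = x ^ (m + 1) - (m + 1) * x + m := by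
  induction m with
  | zero => simp
  | succ m ih =>
    have hsplit : ∑ i ∈ range (m + 1), (((m + 1 : ℕ) : ℝ) - i) * x ^ i
        = ∑ i ∈ range m, ((m : ℝ) - i) * x ^ i + ∑ i ∈ range (m + 1), x ^ i := by
      rw [← add_zero (∑ i ∈ range m, _), ← zero_mul (x ^ m), ← sub_self (m : ℝ),
        ← sum_range_succ (fun i => ((m : ℝ) - i) * x ^ i), ← sum_add_distrib]
      push_cast
      exact sum_congr rfl fun i _ => by ring
    rw [hsplit, mul_add, ih]
    push_cast
    linear_combination (x - 1) * geom_sum_mul x (m + 1)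

-- `∫₀ˢ (1 - t²)ⁿ dt`, expanded by the binomial theorem.
noncomputable def primitiveOneSubSqPow (n : ℕ) (s : ℝ) : ℝ :=
  ∑ i ∈ range (n + 1), (-1) ^ i * (n.choose i : ℝ) * s ^ (2 * i + 1) / (2 * i + 1)

lemma hasDerivAt_primitiveOneSubSqPow (n : ℕ) (s : ℝ) :
    HasDerivAt (primitiveOneSubSqPow n) ((1 - s ^ 2) ^ n) s := by
  have hterm : ∀ i ∈ range (n + 1), HasDerivAt
      (fun t : ℝ => (-1) ^ i * (n.choose i : ℝ) * t ^ (2 * i + 1) / (2 * i + 1))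
      ((n.choose i : ℝ) * (-s ^ 2) ^ i) s := by
    intro i _
    refine (((hasDerivAt_pow (2 * i + 1) s).const_mul ((-1) ^ i * (n.choose i : ℝ))).div_const
      (2 * i + 1 : ℝ)).congr_deriv ?_
    push_cast
    rw [neg_pow (s ^ 2), ← pow_mul]
    field_simp
  rw [← sum_choose_mul_neg_pow]
  exact HasDerivAt.fun_sum hterm

lemma mul_primitiveOneSubSqPow_one_le (n : ℕ) {s : ℝ} (hs₀ : 0 ≤ s) (hs₁ : s ≤ 1) :
    s * primitiveOneSubSqPow n 1 ≤ primitiveOneSubSqPow n s := by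
  have hderiv := hasDerivAt_primitiveOneSubSqPow n
  have hconcave : ConcaveOn ℝ (Set.Icc 0 1) (primitiveOneSubSqPow n) := by
    refine AntitoneOn.concaveOn_of_deriv (convex_Icc 0 1)
      (fun t _ => (hderiv t).continuousAt.continuousWithinAt)
      (fun t _ => (hderiv t).differentiableAt.differentiableWithinAt) ?_
    intro a ha b hb hab
    rw [interior_Icc] at ha hb
    rw [(hderiv a).deriv, (hderiv b).deriv]
    exact pow_le_pow_left₀ (by nlinarith [hb.1, hb.2]) (by nlinarith [ha.1]) n
  have hzero : primitiveOneSubSqPow n 0 = 0 := by simp [primitiveOneSubSqPow]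
  have := hconcave.2 (Set.left_mem_Icc.mpr zero_le_one) (Set.right_mem_Icc.mpr zero_le_one)
    (sub_nonneg.mpr hs₁) hs₀ (by ring)
  simpa [hzero] using this

lemma primitiveOneSubSqPow_comparison_nonneg (n : ℕ) {s : ℝ} (hs₀ : 0 ≤ s) (hs₁ : s ≤ 1) :
    0 ≤ (n + 1) * ((1 + s ^ 2) * primitiveOneSubSqPow n 1 - 2 * s * primitiveOneSubSqPow n s)
      - (1 - s ^ 2) ^ (n + 1) := by
  let I := primitiveOneSubSqPow n
  let B : ℝ → ℝ := fun t => (n + 1) * ((1 + t ^ 2) * I 1 - 2 * t * I t) - (1 - t ^ 2) ^ (n + 1)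
  have hderiv : ∀ t, HasDerivAt B (2 * (n + 1) * (t * I 1 - I t)) t := by
    intro t
    have := ((((hasDerivAt_pow 2 t).const_add 1).mul_const (I 1)).sub
      (((hasDerivAt_id' t).const_mul 2).mul (hasDerivAt_primitiveOneSubSqPow n t))).const_mul
      ((n : ℝ) + 1) |>.sub (((hasDerivAt_pow 2 t).const_sub 1).pow (n + 1))
    refine this.congr_deriv ?_
    push_cast
    ring
  have hanti : AntitoneOn B (Set.Icc 0 1) := by
    refine antitoneOn_of_deriv_nonpos (convex_Icc 0 1)
      (fun t _ => (hderiv t).continuousAt.continuousWithinAt)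
      (fun t _ => (hderiv t).differentiableAt.differentiableWithinAt) ?_
    intro t ht
    rw [interior_Icc] at ht
    rw [(hderiv t).deriv]
    have := mul_primitiveOneSubSqPow_one_le n ht.1.le ht.2.le
    nlinarith
  have hB1 : B 1 = 0 := by simp only [B]; ring
  exact hB1 ▸ hanti ⟨hs₀, hs₁⟩ (Set.right_mem_Icc.mpr zero_le_one) hs₁

lemma sum_choose_mul_sq_pow_div (n : ℕ) (s : ℝ) :
    ∑ j ∈ range (n + 2), (-1) ^ j * ((n + 1).choose j : ℝ) * (s ^ 2) ^ j / (2 * j - 1)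
      = -(1 - s ^ 2) ^ (n + 1) - 2 * (n + 1) * s * primitiveOneSubSqPow n s := by
  -- `(n + 1) C(n, i) = (i + 1) C(n + 1, i + 1)` matches the primitive's terms with the left side's.
  have hterm : ∀ i ∈ range (n + 1),
      (-1) ^ (i + 1) * ((n + 1).choose (i + 1) : ℝ) * (s ^ 2) ^ (i + 1) / (2 * (i + 1 : ℕ) - 1)
        = -(((n + 1).choose (i + 1) : ℝ) * (-s ^ 2) ^ (i + 1))
          - 2 * (n + 1) * s * ((-1) ^ i * (n.choose i : ℝ) * s ^ (2 * i + 1) / (2 * i + 1)) := by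
    intro i _
    have hchoose : ((n : ℝ) + 1) * n.choose i = (i + 1) * (n + 1).choose (i + 1) := by
      exact_mod_cast (Nat.add_one_mul_choose_eq n i).trans (mul_comm _ _)
    rw [neg_pow (s ^ 2), ← pow_mul]
    push_cast
    rw [show 2 * ((i : ℝ) + 1) - 1 = 2 * i + 1 by ring]
    field_simp
    linear_combination (2 * (-1) ^ i * s ^ (2 * i + 2)) * hchoose
  rw [sum_range_succ', sum_congr rfl hterm, sum_sub_distrib, sum_neg_distrib, ← mul_sum,
    ← sum_choose_mul_neg_pow, sum_range_succ' _ (n + 1), primitiveOneSubSqPow]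
  norm_num
  ring

lemma sum_choose_div_two_mul_sub_one (n : ℕ) :
    ∑ j ∈ range (n + 2), (-1) ^ j * ((n + 1).choose j : ℝ) / (2 * j - 1)
      = -2 * (n + 1) * primitiveOneSubSqPow n 1 := by
  simpa using sum_choose_mul_sq_pow_div n 1

lemma sum_choose_mul_comparison (n : ℕ) (s : ℝ) :
    ∑ j ∈ range (n + 2),
        (-1) ^ j * ((n + 1).choose j : ℝ) * ((s ^ 2) ^ j - j * s ^ 2 + (j - 1)) / (2 * j - 1)
      = (n + 1) * ((1 + s ^ 2) * primitiveOneSubSqPow n 1 - 2 * s * primitiveOneSubSqPow n s)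
        - (1 - s ^ 2) ^ (n + 1) := by
  have hsplit : ∀ j ∈ range (n + 2),
      (-1) ^ j * ((n + 1).choose j : ℝ) * ((s ^ 2) ^ j - j * s ^ 2 + (j - 1)) / (2 * j - 1)
        = (-1) ^ j * ((n + 1).choose j : ℝ) * (s ^ 2) ^ j / (2 * j - 1)
          + (1 - s ^ 2) / 2 * ((-1) ^ j * ((n + 1).choose j : ℝ))
          - (1 + s ^ 2) / 2 * ((-1) ^ j * ((n + 1).choose j : ℝ) / (2 * j - 1)) := by
    intro j _
    have : (j * 2 - 1 : ℝ) ≠ 0 := by rw [mul_comm]; exact two_mul_cast_sub_one_ne_zero j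
    field_simp
    ring
  rw [sum_congr rfl hsplit, sum_sub_distrib, sum_add_distrib, ← mul_sum, ← mul_sum,
    sum_neg_one_pow_mul_choose n.succ_ne_zero, sum_choose_mul_sq_pow_div,
    sum_choose_div_two_mul_sub_one]
  ring

noncomputable def gmchWeight (n j : ℕ) : ℝ :=
  (-1) ^ (j + 1) * ((n + 1).choose j : ℝ) / (2 * j - 1)

lemma gmchWeight_mul_two_mul_sub_one (n j : ℕ) :
    gmchWeight n j * (2 * j - 1) = (-1) ^ (j + 1) * ((n + 1).choose j : ℝ) :=
  div_mul_cancel₀ _ (two_mul_cast_sub_one_ne_zero j)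

lemma sum_gmchWeight_mul_two_mul_sub_one (n : ℕ) :
    ∑ j ∈ Icc 1 (n + 1), gmchWeight n j * (2 * j - 1) = 1 := by
  simp only [gmchWeight_mul_two_mul_sub_one]
  exact sum_Icc_neg_one_pow_succ_mul_choose (n + 1) n.succ_ne_zero

-- The truncated subtraction is intended: it switches off the weights with `2 * j - 1 ≤ l`.
lemma gmchC_eq_sum_gmchWeight (n : ℕ) {l : ℕ} (hl : 1 ≤ l) :
    gmchC n l = ∑ j ∈ Icc 1 (n + 1), gmchWeight n j * ((2 * j - 1 - l : ℕ) : ℝ) := by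
  rcases hl.eq_or_lt with rfl | hl
  · have hterm : ∀ j ∈ Icc 1 (n + 1), gmchWeight n j * ((2 * j - 1 - 1 : ℕ) : ℝ)
        = (-1) ^ (j + 1) * ((2 * (j : ℝ) - 3) / (2 * (2 * (j : ℝ) - 1))) * ((n + 1).choose j : ℝ)
          + 1 / 2 * ((-1) ^ (j + 1) * ((n + 1).choose j : ℝ)) := by
      intro j hj
      have hj : 1 ≤ j := (mem_Icc.mp hj).1
      have := two_mul_cast_sub_one_ne_zero j
      rw [Nat.sub_sub, Nat.cast_sub (by omega), gmchWeight]
      push_cast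
      field_simp
      ring
    rw [sum_congr rfl hterm, sum_add_distrib, ← mul_sum,
      sum_Icc_neg_one_pow_succ_mul_choose (n + 1) n.succ_ne_zero, gmchC, if_pos rfl]
    ring
  · rw [gmchC, if_neg hl.ne']
    refine sum_subset (Icc_subset_Icc_left (by omega)) ?_ |>.symm.trans (sum_congr rfl ?_) |>.symm
    · intro j hj hj'
      simp only [mem_Icc, not_and_or] at hj hj'
      rw [Nat.sub_eq_zero_of_le (by omega), Nat.cast_zero, mul_zero]
    · intro j hj
      have hj : (l + 1) / 2 + 1 ≤ j := (mem_Icc.mp hj).1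
      rw [Nat.sub_sub, Nat.cast_sub (by omega), gmchWeight]
      push_cast
      ring

lemma gmchC_two_mul (n : ℕ) : gmchC n (2 * n) = (-1) ^ n / (2 * n + 1) := by
  rw [gmchC, if_neg (by omega), show (2 * n + 1) / 2 + 1 = n + 1 by omega, Icc_self,
    sum_singleton, Nat.choose_self]
  push_cast
  rw [pow_add, pow_add]
  ring

lemma sum_gmchWeight_mul_cast (n : ℕ) :
    ∑ j ∈ Icc 1 (n + 1), gmchWeight n j * j = 1 - gmchC n 1 / 2 := by
  rw [gmchC_eq_sum_gmchWeight n le_rfl, ← sum_gmchWeight_mul_two_mul_sub_one n, sum_div,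
    ← sum_sub_distrib]
  refine sum_congr rfl fun j hj => ?_
  rw [Nat.sub_sub, Nat.cast_sub (by linarith [(mem_Icc.mp hj).1])]
  push_cast
  ring

noncomputable def gmchPoly (n : ℕ) (u : ℝ) : ℝ :=
  1 + ∑ k ∈ Icc 1 (2 * n - 1), gmchC n k * u ^ k + (-1) ^ n * u ^ (2 * n) / (2 * n + 1)

lemma gmchPoly_eq_sum_gmchWeight (n : ℕ) (hn : n ≠ 0) (u : ℝ) :
    gmchPoly n u = ∑ j ∈ Icc 1 (n + 1),
      gmchWeight n j * ∑ l ∈ range (2 * j - 1), (((2 * j - 1 : ℕ) : ℝ) - l) * u ^ l := by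
  have hconst : ∑ j ∈ Icc 1 (n + 1), gmchWeight n j * ((2 * j - 1 - 0 : ℕ) : ℝ) = 1 := by
    rw [← sum_gmchWeight_mul_two_mul_sub_one n]
    refine sum_congr rfl fun j hj => ?_
    rw [Nat.sub_zero, Nat.cast_sub (by linarith [(mem_Icc.mp hj).1])]
    push_cast
    ring
  have htop : Icc 1 (2 * n) = insert (2 * n) (Icc 1 (2 * n - 1)) := by
    ext; simp only [mem_Icc, mem_insert]; omega
  have hcoeff : gmchPoly n u = ∑ l ∈ range (2 * n + 1),
      (∑ j ∈ Icc 1 (n + 1), gmchWeight n j * ((2 * j - 1 - l : ℕ) : ℝ)) * u ^ l := by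
    rw [sum_range_succ_eq_add_sum_Icc, hconst, htop, sum_insert (by simp; omega),
      ← gmchC_eq_sum_gmchWeight n (by omega), gmchC_two_mul, gmchPoly,
      sum_congr rfl fun k hk => by rw [gmchC_eq_sum_gmchWeight n (mem_Icc.mp hk).1]]
    ring
  rw [hcoeff]
  simp only [sum_mul, mul_assoc]
  rw [sum_comm]
  refine sum_congr rfl fun j hj => ?_
  have hj := mem_Icc.mp hj
  rw [← mul_sum]
  congr 1
  refine (sum_subset (range_subset_range.mpr (by omega)) fun l _ hl => ?_).symm.trans
    (sum_congr rfl fun l hl => ?_)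
  · rw [Nat.sub_eq_zero_of_le (not_lt.mp (mt mem_range.mpr hl)), Nat.cast_zero, zero_mul]
  · rw [Nat.cast_sub (mem_range.mp hl).le]

lemma one_sub_sq_mul_gmchPoly_sub (n : ℕ) (hn : n ≠ 0) (u : ℝ) :
    (1 - u) ^ 2 * (gmchPoly n u - (1 - gmchC n 1 / 2))
      = -((n + 1) * ((1 + |u| ^ 2) * primitiveOneSubSqPow n 1
          - 2 * |u| * primitiveOneSubSqPow n |u|) - (1 - |u| ^ 2) ^ (n + 1)) := by
  have hterm : ∀ j ∈ Icc 1 (n + 1),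
      (1 - u) ^ 2 * (gmchWeight n j *
          ∑ l ∈ range (2 * j - 1), (((2 * j - 1 : ℕ) : ℝ) - l) * u ^ l - gmchWeight n j * j)
        = -((-1) ^ j * ((n + 1).choose j : ℝ) * ((u ^ 2) ^ j - j * u ^ 2 + (j - 1))
            / (2 * j - 1)) := by
    intro j hj
    have hj : 1 ≤ j := (mem_Icc.mp hj).1
    have hgeom := one_sub_sq_mul_sum_range_sub_mul_pow (2 * j - 1) u
    have hcast : ((2 * j - 1 : ℕ) : ℝ) = 2 * j - 1 := by
      rw [Nat.cast_sub (by omega)]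
      push_cast
      ring
    rw [Nat.sub_add_cancel (by omega)] at hgeom
    rw [mul_sub, ← mul_assoc, mul_comm _ (gmchWeight n j), mul_assoc, hgeom, hcast, gmchWeight,
      ← pow_mul]
    have := two_mul_cast_sub_one_ne_zero j
    field_simp
    ring
  rw [← sum_gmchWeight_mul_cast, gmchPoly_eq_sum_gmchWeight n hn, ← sum_sub_distrib, mul_sum,
    sum_congr rfl hterm, ← sum_choose_mul_comparison, sq_abs, sum_neg_distrib,
    sum_range_succ_eq_add_sum_Icc]
  simp

lemma gmchPoly_le (n : ℕ) (hn : n ≠ 0) {u : ℝ} (hu : |u| ≤ 1) :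
    gmchPoly n u ≤ 1 - gmchC n 1 / 2 := by
  have hopen : Set.Ioo (-1) 1 ⊆ {u | gmchPoly n u ≤ 1 - gmchC n 1 / 2} := by
    intro u hu
    have hu : |u| < 1 := abs_lt.mpr hu
    have hpos : 0 < (1 - u) ^ 2 := by nlinarith [le_abs_self u]
    have := one_sub_sq_mul_gmchPoly_sub n hn u
    have := primitiveOneSubSqPow_comparison_nonneg n (abs_nonneg u) hu.le
    show gmchPoly n u ≤ 1 - gmchC n 1 / 2
    nlinarith
  have hclosed : IsClosed {u | gmchPoly n u ≤ 1 - gmchC n 1 / 2} :=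
    isClosed_le (by unfold gmchPoly; fun_prop) continuous_const
  rw [← hclosed.closure_subset_iff, closure_Ioo (by norm_num)] at hopen
  exact hopen (abs_le.mp hu)

lemma add_sum_gmchC_mul_pow_mul_pow (n : ℕ) {p : ℝ} (hp : p ≠ 0) (q : ℝ) :
    p ^ (2 * n) + ∑ k ∈ Icc 1 (2 * n - 1), gmchC n k * p ^ (2 * n - k) * q ^ k
        + (-1) ^ n * q ^ (2 * n) / (2 * n + 1)
      = p ^ (2 * n) * gmchPoly n (q / p) := by
  have hterm : ∀ k ∈ Icc 1 (2 * n - 1),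
      gmchC n k * p ^ (2 * n - k) * q ^ k = p ^ (2 * n) * (gmchC n k * (q / p) ^ k) := by
    intro k hk
    rw [div_pow, ← pow_sub_mul_pow p (by have := mem_Icc.mp hk; omega : k ≤ 2 * n)]
    field_simp
  rw [sum_congr rfl hterm, ← mul_sum, gmchPoly, div_pow]
  field_simp

/-- the key estimate (3.10)/(3.11). For an integer `n ≥ 2` and the
coefficients `c_k` as defined, for all real `p`, `q` with `0 ≤ p` and `|q| ≤ p`:
`p^{2n} + Σ_{k=1}^{2n−1} c_k·p^{2n−k}·q^k + (−1)^n·q^{2n}/(2n+1) ≤ ((2 − c₁)/2)·p^{2n}`. -/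
theorem stmt10 (n : ℕ) (hn : 2 ≤ n) (p q : ℝ) (hp : 0 ≤ p) (hq : |q| ≤ p) :
    p ^ (2 * n) + (∑ k ∈ Finset.Icc 1 (2 * n - 1), gmchC n k * p ^ (2 * n - k) * q ^ k) +
        (-1 : ℝ) ^ n * q ^ (2 * n) / (2 * (n : ℝ) + 1) ≤
      ((2 - gmchC n 1) / 2) * p ^ (2 * n) := by
  rcases hp.eq_or_lt with rfl | hp
  · obtain rfl : q = 0 := abs_nonpos_iff.mp hq
    have hk : ∀ k ∈ Icc 1 (2 * n - 1), gmchC n k * 0 ^ (2 * n - k) * (0 : ℝ) ^ k = 0 :=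
      fun k hk => mul_eq_zero_of_right _ (zero_pow (by linarith [(mem_Icc.mp hk).1]))
    simp [sum_eq_zero hk, zero_pow (by omega : 2 * n ≠ 0)]
  · have hu : |q / p| ≤ 1 := by
      rw [abs_div, abs_of_pos hp]
      exact div_le_one_of_le₀ hq hp.le
    rw [add_sum_gmchC_mul_pow_mul_pow n hp.ne']
    calc p ^ (2 * n) * gmchPoly n (q / p) ≤ p ^ (2 * n) * (1 - gmchC n 1 / 2) :=
          mul_le_mul_of_nonneg_left (gmchPoly_le n (by omega) hu) (by positivity)
      _ = (2 - gmchC n 1) / 2 * p ^ (2 * n) := by ring
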